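/- Exactness of the Gauss–Legendre quadrature: let n ≥ 1 and let P_n be the degree-n Legendre polynomial defined by the Rodrigues formula P_n(x) = (1/(2ⁿ n!)) dⁿ/dxⁿ (x² − 1)ⁿ. Then P_n has exactly n distinct real roots η₁, …, η_n, all lying in the open interval (−1, 1), and with the weights w_i = 2 / ( (1 − η_i²) (P_n′(η_i))² ), the quadrature rule is exact for all polynomials of degree at most 2n − 1: for every polynomial f with deg f ≤ 2n − 1, ∫_{−1}^{1} f(η) dη = Σ_{i=1}^{n} w_i f(η_i). -/

import Mathlib

/-!
Rolle's theorem applied `n` times to `(x² - 1)ⁿ`, which vanishes to order `n` at `±1`, gives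
`P_n` `n` distinct roots in `(-1, 1)`, so `P_n` is a multiple of the nodal polynomial `M` of its
roots; `n` integrations by parts in the Rodrigues formula make `P_n`, hence `M`, orthogonal on
`[-1, 1]` to all polynomials of degree `< n`. Dividing `f` by `M`, orthogonality kills the
quotient and the remainder, of degree `< n`, is integrated exactly by Lagrange interpolation at
the roots: the weights are `w_i = ∫ ℓ_i`.

For their closed form, the rule applied to `M' · M / (X - η_i)` gives `w_i M'(η_i)²`, and
writing `1 - X² = (1 - η_i²) - (X - η_i)(X + η_i)`, integration by parts and orthogonality give
`(1 - η_i²) w_i M'(η_i)² = (2n + 1) ∫ M Xⁿ`, which `∫ P_n² = 2 / (2n + 1)` turns into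
`w_i (1 - η_i²) P_n'(η_i)² = 2`.
-/

open MeasureTheory intervalIntegral

/-- The degree-`n` Legendre polynomial via the Rodrigues formula
`P_n(x) = (1/(2ⁿ n!)) dⁿ/dxⁿ (x² − 1)ⁿ`. -/
noncomputable def legendreP (n : ℕ) (x : ℝ) : ℝ :=
  (1 / ((2 : ℝ) ^ n * (n.factorial : ℝ))) * iteratedDeriv n (fun y : ℝ => (y ^ 2 - 1) ^ n) x

namespace GaussLegendre

open Polynomial Finset

theorem degree_sub_C_coeff_mul_X_pow_lt {R : Type*} [Ring R] {n : ℕ} {g : R[X]}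
    (hg : g.natDegree ≤ n) :
    (g - C (g.coeff n) * X ^ n).degree < (n : WithBot ℕ) := by
  rw [degree_lt_iff_coeff_zero]
  intro m hm
  rcases hm.eq_or_lt with rfl | hlt
  · simp
  · simp [coeff_X_pow, hlt.ne', coeff_eq_zero_of_natDegree_lt (hg.trans_lt hlt)]

theorem iteratedDeriv_eval {𝕜 : Type*} [NontriviallyNormedField 𝕜] (p : 𝕜[X]) (k : ℕ) :
    iteratedDeriv k (fun x => p.eval x) = fun x => (derivative^[k] p).eval x := by
  induction k with
  | zero => simp
  | succ k ih =>
    rw [iteratedDeriv_succ, ih, Function.iterate_succ_apply']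
    exact funext fun x => (derivative^[k] p).deriv

theorem exists_roots_derivative_of_roots (p : ℝ[X]) {a b : ℝ} {s : Finset ℝ}
    (hs : ∀ x ∈ s, p.IsRoot x ∧ x ∈ Set.Icc a b) :
    ∃ t : Finset ℝ, #s ≤ #t + 1 ∧
      ∀ y ∈ t, (derivative p).IsRoot y ∧ y ∈ Set.Ioo a b := by
  have hrolle : ∀ x ∈ s, ∀ y ∈ s, x < y →
      ∃ z ∈ Set.Ioo x y, (derivative p).IsRoot z := by
    intro x hx y hy hxy
    obtain ⟨z, hz, hdz⟩ := exists_deriv_eq_zero hxy p.continuousOn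
      ((hs x hx).1.eq_zero.trans (hs y hy).1.eq_zero.symm)
    exact ⟨z, hz, by rwa [IsRoot, ← p.deriv]⟩
  choose! z hz using hrolle
  classical
  refine ⟨((s ×ˢ s).filter fun xy => xy.1 < xy.2).image fun xy => z xy.1 xy.2, ?_, ?_⟩
  · refine card_le_of_interleaved fun x hx y hy hxy _ => ⟨z x y, ?_, (hz x hx y hy hxy).1⟩
    exact mem_image.2 ⟨(x, y), by simp [hx, hy, hxy], rfl⟩
  · simp only [mem_image, mem_filter, mem_product]
    rintro _ ⟨⟨x, y⟩, ⟨⟨hx, hy⟩, hxy⟩, rfl⟩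
    obtain ⟨⟨hxz, hzy⟩, hroot⟩ := hz x hx y hy hxy
    exact ⟨hroot, (hs x hx).2.1.trans_lt hxz, hzy.trans_le (hs y hy).2.2⟩

section PolyIntegral

variable (a b : ℝ)

noncomputable def polyIntegral : ℝ[X] →ₗ[ℝ] ℝ where
  toFun p := ∫ x in a..b, p.eval x
  map_add' p q := by
    simp only [eval_add]
    exact integral_add (p.continuous.intervalIntegrable _ _) (q.continuous.intervalIntegrable _ _)
  map_smul' c p := by simp [intervalIntegral.integral_const_mul]

variable {a b}

theorem polyIntegral_apply (p : ℝ[X]) : polyIntegral a b p = ∫ x in a..b, p.eval x := rfl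

theorem polyIntegral_C_mul (c : ℝ) (p : ℝ[X]) :
    polyIntegral a b (C c * p) = c * polyIntegral a b p := by
  rw [← smul_eq_C_mul, map_smul, smul_eq_mul]

theorem polyIntegral_derivative (p : ℝ[X]) :
    polyIntegral a b (derivative p) = p.eval b - p.eval a :=
  integral_deriv_eq_sub' _ (funext fun _ => p.deriv) (fun _ _ => p.differentiableAt)
    (derivative p).continuous.continuousOn

theorem polyIntegral_derivative_mul (p q : ℝ[X]) :
    polyIntegral a b (derivative p * q) =
      (p * q).eval b - (p * q).eval a - polyIntegral a b (p * derivative q) := by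
  rw [← polyIntegral_derivative, derivative_mul, map_add]
  ring

theorem polyIntegral_iterate_derivative_mul {n : ℕ} {p : ℝ[X]}
    (hp : ∀ k < n, (derivative^[k] p).IsRoot a ∧ (derivative^[k] p).IsRoot b) (q : ℝ[X]) :
    polyIntegral a b (derivative^[n] p * q) =
      (-1) ^ n * polyIntegral a b (p * derivative^[n] q) := by
  induction n generalizing p with
  | zero => simp
  | succ n ih =>
    have hp' : ∀ k < n, (derivative^[k] (derivative p)).IsRoot a ∧
        (derivative^[k] (derivative p)).IsRoot b := fun k hk => by
      simpa only [← Function.iterate_succ_apply] using hp (k + 1) (by omega)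
    obtain ⟨ha, hb⟩ : p.IsRoot a ∧ p.IsRoot b := hp 0 n.succ_pos
    rw [Function.iterate_succ_apply, ih hp', polyIntegral_derivative_mul, eval_mul, eval_mul,
      ha.eq_zero, hb.eq_zero, ← Function.iterate_succ_apply' derivative]
    ring

end PolyIntegral

section Quadrature

variable {a b : ℝ} {n : ℕ} {P : ℝ[X]} {s : Finset ℝ}

def IsOrthogonalToDegreeLT (a b : ℝ) (n : ℕ) (P : ℝ[X]) : Prop :=
  ∀ g : ℝ[X], g.degree < n → polyIntegral a b (P * g) = 0

noncomputable def gaussWeight (a b : ℝ) (s : Finset ℝ) (x : ℝ) : ℝ :=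
  polyIntegral a b (Lagrange.basis s id x)

theorem IsOrthogonalToDegreeLT.polyIntegral_mul (hP : IsOrthogonalToDegreeLT a b n P) {g : ℝ[X]}
    (hg : g.natDegree ≤ n) :
    polyIntegral a b (P * g) = g.coeff n * polyIntegral a b (P * X ^ n) := by
  have hsplit : P * g = C (g.coeff n) * (P * X ^ n) + P * (g - C (g.coeff n) * X ^ n) := by ring
  rw [hsplit, map_add, polyIntegral_C_mul, hP _ (degree_sub_C_coeff_mul_X_pow_lt hg), add_zero]

theorem IsOrthogonalToDegreeLT.of_C_mul {c : ℝ} (hP : IsOrthogonalToDegreeLT a b n (C c * P))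
    (hc : c ≠ 0) : IsOrthogonalToDegreeLT a b n P := fun g hg => by
  have := hP g hg
  rwa [mul_assoc, polyIntegral_C_mul, mul_eq_zero, or_iff_right hc] at this

theorem polyIntegral_eq_sum_gaussWeight (hM : IsOrthogonalToDegreeLT a b #s (Lagrange.nodal s id))
    {f : ℝ[X]} (hf : f.natDegree < 2 * #s) :
    polyIntegral a b f = ∑ x ∈ s, gaussWeight a b s x * f.eval x := by
  set M := Lagrange.nodal s id
  have hMonic : M.Monic := Lagrange.nodal_monic
  have hq : (f /ₘ M).degree < #s := by
    refine degree_le_natDegree.trans_lt ?_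
    rw [natDegree_divByMonic f hMonic, Lagrange.natDegree_nodal]
    exact_mod_cast (by omega : f.natDegree - #s < #s)
  have hr : (f %ₘ M).degree < #s := by
    simpa only [M, Lagrange.degree_nodal] using degree_modByMonic_lt f hMonic
  have hr_eval : ∀ x ∈ s, (f %ₘ M).eval x = f.eval x := fun x hx => by
    have hMx : M.eval x = 0 := Lagrange.eval_nodal_at_node (v := id) hx
    conv_rhs => rw [← modByMonic_add_div f M]
    simp [hMx]
  conv_lhs => rw [← modByMonic_add_div f M, map_add, hM _ hq, add_zero,
    Lagrange.eq_interpolate (Set.injOn_id _) hr]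
  simp only [Lagrange.interpolate_apply, map_sum, polyIntegral_C_mul, gaussWeight, id]
  exact sum_congr rfl fun x hx => by rw [hr_eval x hx, mul_comm]

theorem polyIntegral_derivative_nodal_mul_nodal_erase
    (hM : IsOrthogonalToDegreeLT a b #s (Lagrange.nodal s id)) {x : ℝ} (hx : x ∈ s) :
    polyIntegral a b (derivative (Lagrange.nodal s id) * Lagrange.nodal (s.erase x) id) =
      gaussWeight a b s x * (derivative (Lagrange.nodal s id)).eval x ^ 2 := by
  classical
  have hdeg : (derivative (Lagrange.nodal s id) * Lagrange.nodal (s.erase x) id).natDegree <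
      2 * #s := by
    have h1 := natDegree_derivative_le (Lagrange.nodal s id)
    have h2 := card_erase_of_mem hx
    have h3 := card_pos.mpr ⟨x, hx⟩
    refine natDegree_mul_le.trans_lt ?_
    rw [Lagrange.natDegree_nodal] at h1 ⊢
    omega
  rw [polyIntegral_eq_sum_gaussWeight hM hdeg, sum_eq_single x]
  · have hx' :
        (Lagrange.nodal (s.erase x) id).eval x = (derivative (Lagrange.nodal s id)).eval x :=
      (Lagrange.eval_nodal_derivative_eval_node_eq (v := id) hx).symm
    rw [eval_mul, hx', sq]
  · intro y hy hyx
    have hy' : (Lagrange.nodal (s.erase x) id).eval y = 0 :=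
      Lagrange.eval_nodal_at_node (v := id) (mem_erase.2 ⟨hyx, hy⟩)
    rw [eval_mul, hy', mul_zero, mul_zero]
  · exact fun h => absurd hx h

theorem IsOrthogonalToDegreeLT.polyIntegral_derivative_mul_one_sub_X_sq_mul {m : ℕ}
    (hP : IsOrthogonalToDegreeLT (-1) 1 (m + 1) P) {q : ℝ[X]} (hq : IsMonicOfDegree q m) :
    polyIntegral (-1) 1 (derivative P * ((1 - X ^ 2) * q)) =
      (m + 2) * polyIntegral (-1) 1 (P * X ^ (m + 1)) := by
  have hdeg : (derivative ((1 - X ^ 2) * q)).natDegree ≤ m + 1 := by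
    have h1 := natDegree_derivative_le ((1 - X ^ 2) * q)
    have h2 : ((1 - X ^ 2 : ℝ[X]) * q).natDegree ≤ 2 + m :=
      natDegree_mul_le.trans (add_le_add (by compute_degree!) hq.natDegree_eq.le)
    omega
  have hcoeff : (derivative ((1 - X ^ 2) * q)).coeff (m + 1) = -((m : ℝ) + 2) := by
    have hq_top : q.coeff m = 1 := hq.natDegree_eq ▸ hq.monic.coeff_natDegree
    have hq_zero : q.coeff (m + 1 + 1) = 0 :=
      coeff_eq_zero_of_natDegree_lt (by rw [hq.natDegree_eq]; omega)
    rw [coeff_derivative, sub_mul, one_mul, coeff_sub, coeff_X_pow_mul', if_pos (by omega),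
      show m + 1 + 1 - 2 = m by omega, hq_top, hq_zero]
    push_cast
    ring
  rw [polyIntegral_derivative_mul, hP.polyIntegral_mul hdeg, hcoeff]
  norm_num
  ring

theorem IsOrthogonalToDegreeLT.polyIntegral_mul_X_add_C_mul_derivative {m : ℕ}
    (hP : IsOrthogonalToDegreeLT a b (m + 1) P) (hP_monic : IsMonicOfDegree P (m + 1)) (c : ℝ) :
    polyIntegral a b (P * ((X + C c) * derivative P)) =
      (m + 1) * polyIntegral a b (P * X ^ (m + 1)) := by
  have hP_top : P.coeff (m + 1) = 1 := hP_monic.natDegree_eq ▸ hP_monic.monic.coeff_natDegree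
  have hP_zero : P.coeff (m + 1 + 1) = 0 :=
    coeff_eq_zero_of_natDegree_lt (by rw [hP_monic.natDegree_eq]; omega)
  have hdeg : ((X + C c) * derivative P).natDegree ≤ m + 1 := by
    have := natDegree_derivative_le P
    rw [hP_monic.natDegree_eq] at this
    exact natDegree_mul_le.trans (by rw [natDegree_X_add_C]; omega)
  have hcoeff : ((X + C c) * derivative P).coeff (m + 1) = (m : ℝ) + 1 := by
    rw [add_mul, coeff_add, coeff_X_mul, coeff_C_mul, coeff_derivative, coeff_derivative,
      hP_top, hP_zero]
    ring
  rw [hP.polyIntegral_mul hdeg, hcoeff]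

theorem gaussWeight_mul_one_sub_sq_mul_sq
    (hM : IsOrthogonalToDegreeLT (-1) 1 #s (Lagrange.nodal s id)) {x : ℝ} (hx : x ∈ s) :
    gaussWeight (-1) 1 s x * ((1 - x ^ 2) * (derivative (Lagrange.nodal s id)).eval x ^ 2) =
      (2 * #s + 1) * polyIntegral (-1) 1 (Lagrange.nodal s id * X ^ #s) := by
  classical
  set M := Lagrange.nodal s id
  set q := Lagrange.nodal (s.erase x) id
  have h_exact := polyIntegral_derivative_nodal_mul_nodal_erase hM hx
  obtain ⟨m, hm⟩ : ∃ m, #s = m + 1 := ⟨#s - 1, by have := card_pos.mpr ⟨x, hx⟩; omega⟩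
  rw [hm] at hM ⊢
  have hq : IsMonicOfDegree q m :=
    ⟨by rw [Lagrange.natDegree_nodal, card_erase_of_mem hx, hm]; rfl, Lagrange.nodal_monic⟩
  have hM_monic : IsMonicOfDegree M (m + 1) :=
    ⟨by rw [Lagrange.natDegree_nodal, hm], Lagrange.nodal_monic⟩
  have hsplit : C (1 - x ^ 2) * (derivative M * q) =
      derivative M * ((1 - X ^ 2) * q) + M * ((X + C x) * derivative M) := by
    have hMq : M = (X - C x) * q := Lagrange.nodal_eq_mul_nodal_erase hx
    generalize derivative M = D
    rw [hMq, map_sub, map_one, map_pow]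
    ring
  calc gaussWeight (-1) 1 s x * ((1 - x ^ 2) * (derivative M).eval x ^ 2)
      = polyIntegral (-1) 1 (C (1 - x ^ 2) * (derivative M * q)) := by
        rw [polyIntegral_C_mul, h_exact]
        ring
    _ = (2 * ((m + 1 : ℕ) : ℝ) + 1) * polyIntegral (-1) 1 (M * X ^ (m + 1)) := by
      rw [hsplit, map_add, hM.polyIntegral_derivative_mul_one_sub_X_sq_mul hq,
        hM.polyIntegral_mul_X_add_C_mul_derivative hM_monic]
      push_cast
      ring

end Quadrature

section Legendre

noncomputable def legendre (n : ℕ) : ℝ[X] :=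
  C (1 / (2 ^ n * n.factorial : ℝ)) * derivative^[n] ((X ^ 2 - 1 : ℝ[X]) ^ n)

theorem legendreP_eq_eval (n : ℕ) (x : ℝ) : legendreP n x = (legendre n).eval x := by
  have h : (fun y : ℝ => (y ^ 2 - 1) ^ n) = fun y => ((X ^ 2 - 1 : ℝ[X]) ^ n).eval y := by simp
  rw [legendreP, h, iteratedDeriv_eval, legendre, eval_mul, eval_C]

theorem deriv_legendreP (n : ℕ) (x : ℝ) :
    deriv (legendreP n) x = (derivative (legendre n)).eval x := by
  rw [funext (legendreP_eq_eval n)]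
  exact (legendre n).deriv

theorem isRoot_iterate_derivative_X_sq_sub_one_pow {n k : ℕ} (hk : k < n) {a : ℝ}
    (ha : a ^ 2 = 1) : (derivative^[k] ((X ^ 2 - 1 : ℝ[X]) ^ n)).IsRoot a := by
  have hdvd : (X - C a) ^ n ∣ (X ^ 2 - 1 : ℝ[X]) ^ n :=
    pow_dvd_pow_of_dvd ⟨X + C a, by rw [← C_1, ← ha, C_pow]; ring⟩ n
  exact dvd_iff_isRoot.mp
    ((dvd_pow_self _ (by omega)).trans (pow_sub_dvd_iterate_derivative_of_pow_dvd k hdvd))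

theorem polyIntegral_legendre_mul (n : ℕ) (g : ℝ[X]) :
    polyIntegral (-1) 1 (legendre n * g) =
      1 / (2 ^ n * n.factorial) * polyIntegral (-1) 1 ((1 - X ^ 2) ^ n * derivative^[n] g) := by
  have hboundary : ∀ k < n, (derivative^[k] ((X ^ 2 - 1 : ℝ[X]) ^ n)).IsRoot (-1) ∧
      (derivative^[k] ((X ^ 2 - 1 : ℝ[X]) ^ n)).IsRoot 1 := fun k hk =>
    ⟨isRoot_iterate_derivative_X_sq_sub_one_pow hk (by norm_num),
      isRoot_iterate_derivative_X_sq_sub_one_pow hk (by norm_num)⟩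
  have hsign : (1 - X ^ 2 : ℝ[X]) ^ n = C ((-1) ^ n) * (X ^ 2 - 1) ^ n := by
    rw [map_pow, ← mul_pow, map_neg, map_one]
    ring
  rw [legendre, mul_assoc, polyIntegral_C_mul, polyIntegral_iterate_derivative_mul hboundary,
    hsign, mul_assoc, polyIntegral_C_mul]

theorem legendre_isOrthogonalToDegreeLT (n : ℕ) :
    IsOrthogonalToDegreeLT (-1) 1 n (legendre n) := fun g hg => by
  rw [polyIntegral_legendre_mul, iterate_derivative_eq_zero_of_degree_lt hg, mul_zero, map_zero,
    mul_zero]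

theorem coeff_legendre_self (n : ℕ) :
    (legendre n).coeff n = (2 * n).factorial / (2 ^ n * n.factorial ^ 2) := by
  have hU : ((X ^ 2 - 1 : ℝ[X]) ^ n).coeff (n + n) = 1 := by
    have hmonic : (X ^ 2 - 1 : ℝ[X]).Monic := by monicity!
    have hdeg : (X ^ 2 - 1 : ℝ[X]).natDegree = 2 := by compute_degree!
    have := (hmonic.pow n).coeff_natDegree
    rwa [hmonic.natDegree_pow, hdeg, mul_two] at this
  have hfac := Nat.factorial_mul_descFactorial (show n ≤ 2 * n by omega)
  rw [show 2 * n - n = n by omega] at hfac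
  rw [legendre, coeff_C_mul, coeff_iterate_derivative, hU, nsmul_eq_mul, mul_one, ← two_mul,
    ← hfac]
  push_cast
  field_simp

theorem natDegree_legendre (n : ℕ) : (legendre n).natDegree = n := by
  refine natDegree_eq_of_le_of_coeff_ne_zero ?_ ?_
  · have hU : ((X ^ 2 - 1 : ℝ[X]) ^ n).natDegree ≤ 2 * n := by
      rw [mul_comm]; exact natDegree_pow_le_of_le n (by compute_degree!)
    have := natDegree_iterate_derivative ((X ^ 2 - 1 : ℝ[X]) ^ n) n
    exact (natDegree_C_mul_le _ _).trans (by omega)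
  · rw [coeff_legendre_self]
    positivity

theorem legendre_ne_zero (n : ℕ) : legendre n ≠ 0 := fun h => by
  have := coeff_legendre_self n
  rw [h, coeff_zero] at this
  exact (by positivity : (0 : ℝ) < (2 * n).factorial / (2 ^ n * n.factorial ^ 2)).ne this

theorem polyIntegral_one_sub_X_sq_pow (n : ℕ) :
    polyIntegral (-1) 1 ((1 - X ^ 2 : ℝ[X]) ^ n) =
      2 ^ (2 * n + 1) * n.factorial ^ 2 / (2 * n + 1).factorial := by
  induction n with
  | zero => norm_num [polyIntegral_apply]
  | succ n ih =>
    have hderiv : derivative (X * (1 - X ^ 2 : ℝ[X]) ^ (n + 1)) =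
        C (2 * n + 3 : ℝ) * (1 - X ^ 2) ^ (n + 1) - C (2 * n + 2 : ℝ) * (1 - X ^ 2) ^ n := by
      simp only [derivative_mul, derivative_X, derivative_pow, derivative_sub, derivative_one,
        map_add, map_mul, map_natCast, map_ofNat]
      push_cast
      ring
    have hrec := polyIntegral_derivative (a := -1) (b := 1) (X * (1 - X ^ 2 : ℝ[X]) ^ (n + 1))
    rw [hderiv, map_sub, polyIntegral_C_mul, polyIntegral_C_mul, ih] at hrec
    norm_num at hrec
    rw [show 2 * (n + 1) + 1 = 2 * n + 1 + 1 + 1 by ring, Nat.factorial_succ (2 * n + 1 + 1),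
      Nat.factorial_succ (2 * n + 1), Nat.factorial_succ n]
    push_cast
    field_simp at hrec ⊢
    linear_combination (2 * (n : ℝ) + 2) * hrec

theorem polyIntegral_legendre_mul_self (n : ℕ) :
    polyIntegral (-1) 1 (legendre n * legendre n) = 2 / (2 * n + 1) := by
  have hXn : derivative^[n] (X ^ n : ℝ[X]) = C (n.factorial : ℝ) := by
    rw [iterate_derivative_X_pow_eq_C_mul, Nat.sub_self, pow_zero, mul_one, Nat.descFactorial_self]
  rw [(legendre_isOrthogonalToDegreeLT n).polyIntegral_mul (natDegree_legendre n).le,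
    polyIntegral_legendre_mul, hXn, mul_comm _ (C _), polyIntegral_C_mul,
    polyIntegral_one_sub_X_sq_pow, coeff_legendre_self, Nat.factorial_succ]
  push_cast
  field_simp
  ring

theorem exists_roots_iterate_derivative_X_sq_sub_one_pow {n k : ℕ} (hk : k ≤ n) :
    ∃ s : Finset ℝ, k ≤ #s ∧ ∀ x ∈ s,
      (derivative^[k] ((X ^ 2 - 1 : ℝ[X]) ^ n)).IsRoot x ∧ x ∈ Set.Ioo (-1) 1 := by
  induction k with
  | zero => exact ⟨∅, le_rfl, by simp⟩
  | succ k ih =>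
    obtain ⟨s, hcard, hs⟩ := ih (by omega)
    have hend : ∀ x ∈ ({-1, 1} : Finset ℝ),
        (derivative^[k] ((X ^ 2 - 1 : ℝ[X]) ^ n)).IsRoot x ∧ x ∈ Set.Icc (-1) 1 := by
      simp only [mem_insert, mem_singleton, forall_eq_or_imp, forall_eq]
      refine ⟨⟨?_, by norm_num⟩, ⟨?_, by norm_num⟩⟩ <;>
        exact isRoot_iterate_derivative_X_sq_sub_one_pow (by omega) (by norm_num)
    have hdisj : Disjoint ({-1, 1} : Finset ℝ) s := by
      simp only [disjoint_insert_left, disjoint_singleton_left]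
      exact ⟨fun h => (hs _ h).2.1.false, fun h => (hs _ h).2.2.false⟩
    obtain ⟨t, ht, hroots⟩ := exists_roots_derivative_of_roots _ (s := {-1, 1} ∪ s)
      fun x hx => (mem_union.1 hx).elim (hend x)
        fun hx => ⟨(hs x hx).1, Set.Ioo_subset_Icc_self (hs x hx).2⟩
    rw [card_union_of_disjoint hdisj, card_pair (by norm_num)] at ht
    refine ⟨t, by omega, fun y hy => ?_⟩
    rw [Function.iterate_succ_apply']
    exact hroots y hy

theorem exists_legendre_eq_C_mul_nodal (n : ℕ) :
    ∃ s : Finset ℝ, #s = n ∧ (∀ x ∈ s, x ∈ Set.Ioo (-1) 1) ∧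
      legendre n = C (legendre n).leadingCoeff * Lagrange.nodal s id := by
  obtain ⟨s, hcard, hs⟩ := exists_roots_iterate_derivative_X_sq_sub_one_pow (n := n) le_rfl
  have hne := legendre_ne_zero n
  have hle : s.val ≤ (legendre n).roots := (Multiset.le_iff_subset s.nodup).2 fun x hx => by
    rw [mem_roots hne, legendre, IsRoot, eval_mul, (hs x hx).1.eq_zero, mul_zero]
  have hcard_roots := (legendre n).card_roots'
  rw [natDegree_legendre] at hcard_roots
  have hroots : s.val = (legendre n).roots :=
    Multiset.eq_of_le_of_card_le hle (hcard_roots.trans (by simpa using hcard))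
  have hs_card : #s = n := le_antisymm (by simpa [← hroots] using hcard_roots) hcard
  refine ⟨s, hs_card, fun x hx => (hs x hx).2, ?_⟩
  have hsplit := C_leadingCoeff_mul_prod_multiset_X_sub_C
    (p := legendre n) (by rw [← hroots, natDegree_legendre]; exact hs_card)
  rw [← hroots] at hsplit
  exact hsplit.symm

theorem isOrthogonalToDegreeLT_nodal_of_legendre_eq {n : ℕ} {s : Finset ℝ}
    (hP : legendre n = C (legendre n).leadingCoeff * Lagrange.nodal s id) :
    IsOrthogonalToDegreeLT (-1) 1 n (Lagrange.nodal s id) :=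
  (hP ▸ legendre_isOrthogonalToDegreeLT n).of_C_mul (leadingCoeff_ne_zero.2 (legendre_ne_zero n))

theorem gaussWeight_legendre {n : ℕ} {s : Finset ℝ} (hcard : #s = n)
    (hP : legendre n = C (legendre n).leadingCoeff * Lagrange.nodal s id) {x : ℝ} (hx : x ∈ s) :
    gaussWeight (-1) 1 s x = 2 / ((1 - x ^ 2) * (derivative (legendre n)).eval x ^ 2) := by
  set c := (legendre n).leadingCoeff
  set M := Lagrange.nodal s id
  have hM : IsOrthogonalToDegreeLT (-1) 1 n M := isOrthogonalToDegreeLT_nodal_of_legendre_eq hP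
  have hM_top : M.coeff n = 1 := by
    have := (Lagrange.nodal_monic (s := s) (v := id)).coeff_natDegree
    rwa [Lagrange.natDegree_nodal, hcard] at this
  have hMM : polyIntegral (-1) 1 (M * M) = polyIntegral (-1) 1 (M * X ^ n) := by
    rw [hM.polyIntegral_mul (by rw [Lagrange.natDegree_nodal, hcard]), hM_top, one_mul]
  have hnorm : (2 * n + 1) * (c ^ 2 * polyIntegral (-1) 1 (M * X ^ n)) = 2 := by
    have h := polyIntegral_legendre_mul_self n
    rw [hP, show C c * M * (C c * M) = C (c ^ 2) * (M * M) by rw [C_pow]; ring,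
      polyIntegral_C_mul, hMM] at h
    rw [h]
    field_simp
  have hweight := gaussWeight_mul_one_sub_sq_mul_sq (hcard ▸ hM) hx
  rw [hcard] at hweight
  have hderiv : (derivative (legendre n)).eval x = c * (derivative M).eval x := by
    rw [hP, derivative_C_mul, eval_mul, eval_C]
  have hprod :
      gaussWeight (-1) 1 s x * ((1 - x ^ 2) * (derivative (legendre n)).eval x ^ 2) = 2 := by
    rw [hderiv]
    linear_combination c ^ 2 * hweight + hnorm
  refine eq_div_of_mul_eq (fun h => ?_) hprod
  rw [h, mul_zero] at hprod
  exact two_ne_zero hprod.symm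

end Legendre

end GaussLegendre

open GaussLegendre Polynomial Finset

/-- Exactness of Gauss–Legendre quadrature: for `n ≥ 1`, `P_n` has exactly `n` distinct
real roots `η₁,…,η_n`, all in `(−1,1)`, and with weights
`w_i = 2/((1 − η_i²)(P_n′(η_i))²)` the rule `∫_{−1}^1 f = Σ w_i f(η_i)` is exact for all
polynomials `f` of degree at most `2n − 1`. -/
theorem gauss_legendre_quadrature_exact (n : ℕ) (hn : 1 ≤ n) :
    ∃ η : Fin n → ℝ,
      Function.Injective η ∧
      (∀ i, η i ∈ Set.Ioo (-1 : ℝ) 1) ∧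
      {x : ℝ | legendreP n x = 0} = Set.range η ∧
      ∀ f : Polynomial ℝ, f.natDegree ≤ 2 * n - 1 →
        (∫ x in (-1 : ℝ)..1, Polynomial.eval x f) =
          ∑ i, (2 / ((1 - η i ^ 2) * (deriv (legendreP n) (η i)) ^ 2)) *
            Polynomial.eval (η i) f := by
  obtain ⟨s, hcard, hIoo, hP⟩ := exists_legendre_eq_C_mul_nodal n
  have hc : (legendre n).leadingCoeff ≠ 0 := leadingCoeff_ne_zero.2 (legendre_ne_zero n)
  have hM : IsOrthogonalToDegreeLT (-1) 1 #s (Lagrange.nodal s id) :=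
    hcard ▸ isOrthogonalToDegreeLT_nodal_of_legendre_eq hP
  refine ⟨s.orderEmbOfFin hcard, (s.orderEmbOfFin hcard).injective,
    fun i => hIoo _ (s.orderEmbOfFin_mem hcard i), ?_, fun f hf => ?_⟩
  · rw [range_orderEmbOfFin]
    ext x
    rw [Set.mem_ofPred, mem_coe, legendreP_eq_eval, hP, eval_mul, eval_C, Lagrange.eval_nodal]
    simp [hc, prod_eq_zero_iff, sub_eq_zero]
  · rw [← polyIntegral_apply, polyIntegral_eq_sum_gaussWeight hM (by omega)]
    calc ∑ x ∈ s, gaussWeight (-1) 1 s x * f.eval x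
        = ∑ x ∈ s, 2 / ((1 - x ^ 2) * deriv (legendreP n) x ^ 2) * f.eval x :=
          sum_congr rfl fun x hx => by rw [gaussWeight_legendre hcard hP hx, deriv_legendreP]
      _ = _ := by
        conv_lhs => rw [← s.map_orderEmbOfFin_univ hcard, sum_map]
        rfl
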